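/- Let H be a Hopf algebra over a field k and A a quasi partial H-comodule algebra. For any quasi partial (A,H)-relative Hopf module M, the coinvariants M^{coH} = {m ∈ M | ρ_M(m) = π_M(m ⊗ 1_H)} are naturally isomorphic to Hom_A^H(A, M), the set of right A-linear morphisms of partial H-comodules from A to M, via f ↦ f(1_A). -/
import Mathlib


open TensorProduct

universe u

section Defs

variable (k : Type u) [Field k]

/-- The map `X ⊗ ε : X ⊗ H → X` (composed with `X ⊗ k ≅ X`). -/
noncomputable def epsMap (X H : Type u) [AddCommGroup H] [Module k H] [Coalgebra k H]
    [AddCommGroup X] [Module k X] : X ⊗[k] H →ₗ[k] X :=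
  (TensorProduct.rid k X).toLinearMap ∘ₗ
    LinearMap.lTensor X (Coalgebra.counit : H →ₗ[k] k)

/-- The map `X ⊗ Δ` followed by reassociation, `X ⊗ H → (X ⊗ H) ⊗ H`. -/
noncomputable def deltaMap (X H : Type u) [AddCommGroup H] [Module k H] [Coalgebra k H]
    [AddCommGroup X] [Module k X] : X ⊗[k] H →ₗ[k] (X ⊗[k] H) ⊗[k] H :=
  (TensorProduct.assoc k X H H).symm.toLinearMap ∘ₗ
    LinearMap.lTensor X (Coalgebra.comul : H →ₗ[k] H ⊗[k] H)

/-- `(X, X•H, π, ρ)` is a quasi partial `H`-comodule: `π` is surjective, [QPC1]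
counitality holds (via the induced map `X•ε`), and [QPC2] coassociativity holds in
the coassociativity pushout `Θ = ((X•H) ⊗ H)/(K + L)`. -/
noncomputable def IsQuasiPartialComodule {X XbH H : Type u}
    [AddCommGroup H] [Module k H] [Coalgebra k H]
    [AddCommGroup X] [Module k X] [AddCommGroup XbH] [Module k XbH]
    (π : X ⊗[k] H →ₗ[k] XbH) (ρ : X →ₗ[k] XbH) : Prop :=
  Function.Surjective π ∧
  (∃ c : XbH →ₗ[k] X, c ∘ₗ π = epsMap k X H ∧ c ∘ₗ ρ = LinearMap.id) ∧
  (∀ (x : X) (u : X ⊗[k] H), π u = ρ x →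
    TensorProduct.map ρ (LinearMap.id : H →ₗ[k] H) u -
      TensorProduct.map π (LinearMap.id : H →ₗ[k] H) (deltaMap k X H u) ∈
    Submodule.map (TensorProduct.map ρ (LinearMap.id : H →ₗ[k] H)) (LinearMap.ker π) ⊔
    Submodule.map (TensorProduct.map π (LinearMap.id : H →ₗ[k] H) ∘ₗ deltaMap k X H)
      (LinearMap.ker π))

variable {H A M : Type u} [Ring H] [HopfAlgebra k H]
  [AddCommGroup M] [Module k M] [Ring A] [Algebra k A]

/-- The right `A`-action on `M` as a map `M ⊗ A → M`. -/
noncomputable def actLin (actM : M →ₗ[k] A →ₗ[k] M) : M ⊗[k] A →ₗ[k] M :=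
  TensorProduct.lift actM

/-- The `A ⊗ H`-action on `M ⊗ H`: `(m ⊗ h)·(a ⊗ h') = ma ⊗ hh'`. -/
noncomputable def muMH (actM : M →ₗ[k] A →ₗ[k] M) :
    (M ⊗[k] H) ⊗[k] (A ⊗[k] H) →ₗ[k] M ⊗[k] H :=
  TensorProduct.map (actLin k actM) (LinearMap.mul' k H) ∘ₗ
    (TensorProduct.tensorTensorTensorComm k M H A H).toLinearMap

/-- The map `M ⊗ (A ⊗ H) → M ⊗ H`, `m ⊗ (a ⊗ h) ↦ ma ⊗ h`. -/
noncomputable def act2 (actM : M →ₗ[k] A →ₗ[k] M) :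
    M ⊗[k] (A ⊗[k] H) →ₗ[k] M ⊗[k] H :=
  TensorProduct.map (actLin k actM) (LinearMap.id : H →ₗ[k] H) ∘ₗ
    (TensorProduct.assoc k M A H).symm.toLinearMap

end Defs


/-- For a quasi partial `(A,H)`-relative Hopf module `M` over a quasi partial
`H`-comodule algebra `A`, the coinvariants
`M^{coH} = {m | ρ_M(m) = π_M(m ⊗ 1_H)}` are in bijection with
`Hom_A^H(A, M)`, the right `A`-linear morphisms of partial `H`-comodules
`A → M`, via `f ↦ f(1_A)`. -/
theorem coinvariants_eq_hom {k H A AbH M MbH : Type u} [Field k] [Ring H] [HopfAlgebra k H]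
    [Ring A] [Algebra k A] [AddCommGroup AbH] [Module k AbH]
    [AddCommGroup M] [Module k M] [AddCommGroup MbH] [Module k MbH]
    (πA : A ⊗[k] H →ₗ[k] AbH) (ρA : A →ₗ[k] AbH)
    (hA : IsQuasiPartialComodule k πA ρA)
    -- `A` is a quasi partial `H`-comodule algebra:
    (mulAbH : AbH →ₗ[k] AbH →ₗ[k] AbH)
    (hmul : ∀ (a a' : A) (h h' : H),
      mulAbH (πA (a ⊗ₜ h)) (πA (a' ⊗ₜ h')) = πA ((a * a') ⊗ₜ (h * h')))
    (hone : ρA 1 = πA (1 ⊗ₜ 1))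
    (hρmul : ∀ a a' : A, ρA (a * a') = mulAbH (ρA a) (ρA a'))
    -- `M` is a quasi partial `(A,H)`-relative Hopf module:
    (πM : M ⊗[k] H →ₗ[k] MbH) (ρM : M →ₗ[k] MbH)
    (hM : IsQuasiPartialComodule k πM ρM)
    (actM : M →ₗ[k] A →ₗ[k] M)
    (act_one : ∀ m : M, actM m 1 = m)
    (act_mul : ∀ (m : M) (a b : A), actM (actM m a) b = actM m (a * b))
    -- [PRHM1]
    (prhm1 : ∀ w : (M ⊗[k] H) ⊗[k] (A ⊗[k] H),
      TensorProduct.map πM πA w = 0 → πM (muMH k actM w) = 0)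
    -- [PRHM2]
    (smulMH : MbH →ₗ[k] AbH →ₗ[k] MbH)
    (hsmul : ∀ (m : M) (h : H) (a : A) (h' : H),
      smulMH (πM (m ⊗ₜ h)) (πA (a ⊗ₜ h')) = πM (actM m a ⊗ₜ (h * h')))
    (prhm2 : ∀ (m : M) (a : A), ρM (actM m a) = smulMH (ρM m) (ρA a)) :
    -- `f ↦ f(1_A)` is a bijection from `Hom_A^H(A,M)` onto `M^{coH}`
    Set.BijOn (fun f : A →ₗ[k] M => f 1)
      {f : A →ₗ[k] M |
        -- `f` is right `A`-linear
        (∀ a b : A, f (a * b) = actM (f a) b) ∧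
        -- `(f ⊗ H)(ker π_A) ⊆ ker π_M`, so that `f•H` is defined
        (∀ v ∈ LinearMap.ker πA,
          TensorProduct.map f (LinearMap.id : H →ₗ[k] H) v ∈ LinearMap.ker πM) ∧
        -- `f` is a morphism of partial `H`-comodules: `ρ_M ∘ f = (f•H) ∘ ρ_A`
        (∀ (a : A) (u : A ⊗[k] H), πA u = ρA a →
          ρM (f a) = πM (TensorProduct.map f (LinearMap.id : H →ₗ[k] H) u))}
      {m : M | ρM m = πM (m ⊗ₜ 1)} := by
  refine ⟨?_, ?_, ?_⟩
  · -- MapsTo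
    intro f hf
    obtain ⟨hlin, hker, hcom⟩ := hf
    have := hcom 1 (1 ⊗ₜ 1) (by rw [hone])
    simpa using this
  · -- InjOn
    intro f hf g hg h
    obtain ⟨hf1, -, -⟩ := hf
    obtain ⟨hg1, -, -⟩ := hg
    simp only at h
    apply LinearMap.ext
    intro a
    have h1 : f a = actM (f 1) a := by rw [← hf1, one_mul]
    have h2 : g a = actM (g 1) a := by rw [← hg1, one_mul]
    rw [h1, h2, h]
  · -- SurjOn
    intro m hm
    simp only [Set.mem_setOf_eq] at hm
    have key : (TensorProduct.map (actM m) (LinearMap.id : H →ₗ[k] H)) =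
        (muMH k actM) ∘ₗ (TensorProduct.mk k (M ⊗[k] H) (A ⊗[k] H) (m ⊗ₜ (1:H))) := by
      apply TensorProduct.ext'
      intro a h
      simp [muMH, actLin, mul_comm]
    refine ⟨actM m, ⟨?_, ?_, ?_⟩, by simpa using act_one m⟩
    · intro a b
      simp [← act_mul]
    · intro v hv
      simp only [LinearMap.mem_ker] at hv ⊢
      rw [key]
      simp only [LinearMap.comp_apply, TensorProduct.mk_apply]
      apply prhm1
      simp [hv]
    · intro a u hu
      have key2 : (πM ∘ₗ TensorProduct.map (actM m) (LinearMap.id : H →ₗ[k] H)) =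
          (smulMH (πM (m ⊗ₜ (1:H)))) ∘ₗ πA := by
        apply TensorProduct.ext'
        intro a' h
        simp [hsmul]
      have := congrFun (congrArg DFunLike.coe key2) u
      simp only [LinearMap.comp_apply] at this
      rw [this, hu, prhm2, hm]
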